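/- Every λ-term that is strongly normalizing for β-reduction is typable in the intersection type system D. -/
import Mathlib


/-- Untyped λ-terms in de Bruijn representation. -/
inductive Term : Type
  | var : ℕ → Term
  | lam : Term → Term
  | app : Term → Term → Term
  deriving DecidableEq

namespace Term

/-- Shift (lift) all de Bruijn indices ≥ d by one. -/
def lift (d : ℕ) : Term → Term
  | var n => var (if n < d then n else n + 1)
  | lam t => lam (lift (d + 1) t)
  | app t u => app (lift d t) (lift d u)

/-- Capture-avoiding substitution `t[k := u]` (de Bruijn style). -/
def subst : Term → ℕ → Term → Term
  | var n, k, u => if n = k then u else var (if n < k then n else n - 1)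
  | lam t, k, u => lam (subst t (k + 1) (lift 0 u))
  | app t v, k, u => app (subst t k u) (subst v k u)

/-- Swap the de Bruijn indices d and d+1 (exchange of two adjacent binders). -/
def swap (d : ℕ) : Term → Term
  | var n => var (if n = d then d + 1 else if n = d + 1 then d else n)
  | lam t => lam (swap (d + 1) t)
  | app t u => app (swap d t) (swap d u)

end Term

/-- The four reduction rules. -/
inductive Rule | beta | delta | gamma | assoc

/-- One-step reduction by a given rule (closed under congruence).
β: (λx.M N) ▷ M[x:=N];
δ: (λy.λx.M N) ▷ λx.(λy.M N), x ∉ FV(N);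
γ: (λx.M N P) ▷ (λx.(M P) N), x ∉ FV(P);
assoc: (M (λx.N P)) ▷ (λx.(M N) P), x ∉ FV(M).
Freshness conditions are realized by lifting. -/
inductive Step : Rule → Term → Term → Prop
  | beta (M N) : Step .beta (.app (.lam M) N) (Term.subst M 0 N)
  | delta (M N) : Step .delta (.app (.lam (.lam M)) N)
      (.lam (.app (.lam (Term.swap 0 M)) (Term.lift 0 N)))
  | gamma (M N P) : Step .gamma (.app (.app (.lam M) N) P)
      (.app (.lam (.app M (Term.lift 0 P))) N)
  | assoc (M N P) : Step .assoc (.app M (.app (.lam N) P))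
      (.app (.lam (.app (Term.lift 0 M) N)) P)
  | appCongL {r t t'} (u) : Step r t t' → Step r (.app t u) (.app t' u)
  | appCongR {r u u'} (t) : Step r u u' → Step r (.app t u) (.app t u')
  | lamCong {r t t'} : Step r t t' → Step r (.lam t) (.lam t')

/-- One-step reduction by the union of the four rules. -/
def StepAll (t t' : Term) : Prop := ∃ r, Step r t t'

/-- Strong normalization for the union of β, δ, γ, assoc. -/
def SN (t : Term) : Prop := Acc (fun a b => StepAll b a) t

/-- Strong normalization for β alone. -/
def SNbeta (t : Term) : Prop := Acc (fun a b => Step .beta b a) t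

mutual
/-- Simple types: atoms and arrows with simple codomain. -/
inductive STy : Type
  | atom : ℕ → STy
  | arrow : Ty → STy → STy
/-- Types of system D: intersections of simple types. -/
inductive Ty : Type
  | simple : STy → Ty
  | inter : STy → Ty → Ty
end

/-- Typing judgment of system D (contexts are lists of types, de Bruijn). -/
inductive Typing : List Ty → Term → Ty → Prop
  | var {Γ n A} : Γ[n]? = some A → Typing Γ (.var n) A
  | app {Γ M N A B} : Typing Γ M (.simple (.arrow A B)) → Typing Γ N A →
      Typing Γ (.app M N) (.simple B)
  | lam {Γ M A B} : Typing (A :: Γ) M (.simple B) →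
      Typing Γ (.lam M) (.simple (.arrow A B))
  | interI {Γ M A B} : Typing Γ M (.simple A) → Typing Γ M B →
      Typing Γ M (.inter A B)
  | interE1 {Γ M A B} : Typing Γ M (.inter A B) → Typing Γ M (.simple A)
  | interE2 {Γ M A B} : Typing Γ M (.inter A B) → Typing Γ M B

/-- A term is typable in system D. -/
def Typable (t : Term) : Prop := ∃ Γ A, Typing Γ t A

/-- (H M₁ ... Mₙ). -/
def appList (H : Term) (Ms : List Term) : Term := Ms.foldl .app H

namespace SNProof
open Term

/-! ### Components of intersection types -/

def comps : Ty → List STy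
  | .simple S => [S]
  | .inter S T => S :: comps T

theorem Ty.rec' {motive : Ty → Prop} (h1 : ∀ S, motive (.simple S))
    (h2 : ∀ S T, motive T → motive (.inter S T)) : ∀ T, motive T
  | .simple S => h1 S
  | .inter S T => h2 S T (Ty.rec' h1 h2 T)

lemma exists_comp (T : Ty) : ∃ S, S ∈ comps T := by
  cases T with
  | simple S => exact ⟨S, by simp [comps]⟩
  | inter S T => exact ⟨S, by simp [comps]⟩

lemma compE {Γ M} : ∀ {A : Ty}, Typing Γ M A → ∀ {S}, S ∈ comps A → Typing Γ M (.simple S) := by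
  intro A
  induction A using Ty.rec' with
  | h1 S' => intro h S hS; simp [comps] at hS; subst hS; exact h
  | h2 S' B ih =>
    intro h S hS
    simp [comps] at hS
    rcases hS with rfl | hS
    · exact h.interE1
    · exact ih h.interE2 hS

lemma compI {Γ M} : ∀ {A : Ty}, (∀ S ∈ comps A, Typing Γ M (.simple S)) → Typing Γ M A := by
  intro A
  induction A using Ty.rec' with
  | h1 S => intro h; exact h S (by simp [comps])
  | h2 S B ih =>
    intro h
    exact .interI (h S (by simp [comps])) (ih fun S' hS' => h S' (by simp [comps, hS']))

lemma ofSubset {Γ M A B} (hsub : ∀ S ∈ comps A, S ∈ comps B) (h : Typing Γ M B) :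
    Typing Γ M A :=
  compI fun S hS => compE h (hsub S hS)

/-! ### Glue -/

def glue : Ty → Ty → Ty
  | .simple S, B => .inter S B
  | .inter S A, B => .inter S (glue A B)

lemma comps_glue : ∀ A B, comps (glue A B) = comps A ++ comps B
  | .simple S, B => by simp [glue, comps]
  | .inter S A, B => by simp [glue, comps, comps_glue A B]

/-! ### Context order -/

abbrev CtxLe (Γ Γ' : List Ty) : Prop :=
  ∀ (n : ℕ) (A : Ty), Γ[n]? = some A → ∃ A' : Ty, Γ'[n]? = some A' ∧ ∀ S ∈ comps A, S ∈ comps A'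

lemma CtxLe.refl (Γ : List Ty) : CtxLe Γ Γ := fun n A h => ⟨A, h, fun _ hS => hS⟩

lemma CtxLe.cons {Γ Γ' A} (h : CtxLe Γ Γ') : CtxLe (A :: Γ) (A :: Γ') := by
  intro n B hB
  cases n with
  | zero =>
    refine ⟨A, by simp, ?_⟩
    have e : A = B := by simpa using hB
    subst e; exact fun _ hS => hS
  | succ n => simp at hB ⊢; exact h n B hB

lemma ctxMono {Γ M A} (h : Typing Γ M A) : ∀ {Γ'}, CtxLe Γ Γ' → Typing Γ' M A := by
  induction h with
  | var hA =>
    intro Γ' hle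
    obtain ⟨A', hA', hsub⟩ := hle _ _ hA
    exact ofSubset hsub (.var hA')
  | app _ _ ih1 ih2 => exact fun hle => .app (ih1 hle) (ih2 hle)
  | lam _ ih => exact fun hle => .lam (ih hle.cons)
  | interI _ _ ih1 ih2 => exact fun hle => .interI (ih1 hle) (ih2 hle)
  | interE1 _ ih => exact fun hle => (ih hle).interE1
  | interE2 _ ih => exact fun hle => (ih hle).interE2

def glueCtx : List Ty → List Ty → List Ty
  | [], Δ => Δ
  | Γ, [] => Γ
  | A :: Γ, B :: Δ => glue A B :: glueCtx Γ Δ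

lemma ctxLe_glue_left : ∀ Γ Δ, CtxLe Γ (glueCtx Γ Δ)
  | [], Δ => by intro n A h; simp at h
  | A :: Γ, [] => fun n C h => ⟨C, by simpa [glueCtx] using h, fun _ hS => hS⟩
  | A :: Γ, B :: Δ => by
    intro n C hC
    cases n with
    | zero =>
      refine ⟨glue A B, by simp [glueCtx], ?_⟩
      intro S hS
      have e : A = C := by simpa using hC
      subst e
      rw [comps_glue]
      exact List.mem_append_left _ hS
    | succ n =>
      simp at hC
      obtain ⟨A', h1, h2⟩ := ctxLe_glue_left Γ Δ n C hC
      exact ⟨A', by simp [glueCtx, h1], h2⟩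

lemma ctxLe_glue_right : ∀ Γ Δ, CtxLe Δ (glueCtx Γ Δ)
  | [], Δ => fun n C h => ⟨C, by simpa [glueCtx] using h, fun _ hS => hS⟩
  | A :: Γ, [] => by intro n C h; simp at h
  | A :: Γ, B :: Δ => by
    intro n C hC
    cases n with
    | zero =>
      refine ⟨glue A B, by simp [glueCtx], ?_⟩
      intro S hS
      have e : B = C := by simpa using hC
      subst e
      rw [comps_glue]
      exact List.mem_append_right _ hS
    | succ n =>
      simp at hC
      obtain ⟨A', h1, h2⟩ := ctxLe_glue_right Γ Δ n C hC
      exact ⟨A', by simp [glueCtx, h1], h2⟩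

/-! ### Inversion lemmas -/

lemma varInv {Γ P T} (h : Typing Γ P T) :
    ∀ n, P = .var n → ∃ A, Γ[n]? = some A ∧ ∀ S ∈ comps T, S ∈ comps A := by
  induction h with
  | var hA =>
    intro n e
    injection e with e; subst e
    exact ⟨_, hA, fun _ hS => hS⟩
  | app _ _ _ _ => rintro n ⟨⟩
  | lam _ _ => rintro n ⟨⟩
  | interI _ _ ih1 ih2 =>
    intro n e; subst e
    obtain ⟨A1, hA1, hs1⟩ := ih1 n rfl
    obtain ⟨A2, hA2, hs2⟩ := ih2 n rfl
    rw [hA1] at hA2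
    cases hA2
    refine ⟨A1, hA1, ?_⟩
    intro S hS
    simp [comps] at hS
    rcases hS with rfl | hS
    · exact hs1 S (by simp [comps])
    · exact hs2 S hS
  | interE1 _ ih =>
    intro n e; subst e
    obtain ⟨A, hA, hs⟩ := ih n rfl
    exact ⟨A, hA, fun S hS => by simp [comps] at hS; subst hS; exact hs _ (by simp [comps])⟩
  | interE2 _ ih =>
    intro n e; subst e
    obtain ⟨A, hA, hs⟩ := ih n rfl
    exact ⟨A, hA, fun S hS => hs S (by simp [comps, hS])⟩

lemma lamInv {Γ P T} (h : Typing Γ P T) :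
    ∀ M, P = .lam M → ∀ S ∈ comps T, ∃ A B, S = .arrow A B ∧ Typing (A :: Γ) M (.simple B) := by
  induction h with
  | var _ => rintro M ⟨⟩
  | app _ _ _ _ => rintro M ⟨⟩
  | lam h _ =>
    intro M e S hS
    injection e with e; subst e
    simp [comps] at hS; subst hS
    exact ⟨_, _, rfl, h⟩
  | interI _ _ ih1 ih2 =>
    intro M e S hS; subst e
    simp [comps] at hS
    rcases hS with rfl | hS
    · exact ih1 M rfl S (by simp [comps])
    · exact ih2 M rfl S hS
  | interE1 _ ih =>
    intro M e S hS; subst e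
    simp [comps] at hS; subst hS
    exact ih M rfl _ (by simp [comps])
  | interE2 _ ih =>
    intro M e S hS; subst e
    exact ih M rfl S (by simp [comps, hS])

lemma appInv {Γ P T} (h : Typing Γ P T) :
    ∀ M N, P = .app M N → ∀ S ∈ comps T,
      ∃ A, Typing Γ M (.simple (.arrow A S)) ∧ Typing Γ N A := by
  induction h with
  | var _ => rintro M N ⟨⟩
  | app h1 h2 _ _ =>
    intro M N e S hS
    injection e with e1 e2; subst e1; subst e2
    simp [comps] at hS; subst hS
    exact ⟨_, h1, h2⟩
  | lam _ _ => rintro M N ⟨⟩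
  | interI _ _ ih1 ih2 =>
    intro M N e S hS; subst e
    simp [comps] at hS
    rcases hS with rfl | hS
    · exact ih1 M N rfl S (by simp [comps])
    · exact ih2 M N rfl S hS
  | interE1 _ ih =>
    intro M N e S hS; subst e
    simp [comps] at hS; subst hS
    exact ih M N rfl _ (by simp [comps])
  | interE2 _ ih =>
    intro M N e S hS; subst e
    exact ih M N rfl S (by simp [comps, hS])


/-! ### Insertion into contexts -/

def ins : ℕ → Ty → List Ty → List Ty
  | 0, A, Γ => A :: Γ
  | d+1, A, [] => [A]
  | d+1, A, B :: Γ => B :: ins d A Γ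

lemma ins_get_lt : ∀ {d : ℕ} {A : Ty} {Γ : List Ty} {n : ℕ}, n < d → d ≤ Γ.length →
    (ins d A Γ)[n]? = Γ[n]?
  | 0, A, Γ, n, h, _ => absurd h (Nat.not_lt_zero n)
  | d+1, A, [], n, h, hd => absurd hd (by simp)
  | d+1, A, B :: Γ, 0, h, hd => by simp [ins]
  | d+1, A, B :: Γ, n+1, h, hd => by
    simp only [ins, List.getElem?_cons_succ]
    exact ins_get_lt (Nat.lt_of_succ_lt_succ h) (Nat.le_of_succ_le_succ hd)

lemma ins_get_ge : ∀ {d : ℕ} {A : Ty} {Γ : List Ty} {n : ℕ}, d ≤ n → d ≤ Γ.length →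
    (ins d A Γ)[n+1]? = Γ[n]?
  | 0, A, Γ, n, _, _ => by simp [ins]
  | d+1, A, [], n, h, hd => absurd hd (by simp)
  | d+1, A, B :: Γ, 0, h, hd => absurd h (by omega)
  | d+1, A, B :: Γ, n+1, h, hd => by
    simp only [ins, List.getElem?_cons_succ]
    exact ins_get_ge (Nat.le_of_succ_le_succ h) (Nat.le_of_succ_le_succ hd)

lemma ins_get_self : ∀ {d : ℕ} {A : Ty} {Γ : List Ty}, d ≤ Γ.length →
    (ins d A Γ)[d]? = some A
  | 0, A, Γ, _ => by simp [ins]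
  | d+1, A, [], hd => absurd hd (by simp)
  | d+1, A, B :: Γ, hd => by
    simp only [ins, List.getElem?_cons_succ]
    exact ins_get_self (Nat.le_of_succ_le_succ hd)

lemma ctxLe_ins {A A' : Ty} (h : ∀ S ∈ comps A, S ∈ comps A') :
    ∀ {d : ℕ} {Γ : List Ty}, d ≤ Γ.length → CtxLe (ins d A Γ) (ins d A' Γ) := by
  intro d Γ hd n B hB
  rcases Nat.lt_trichotomy n d with hn | rfl | hn
  · rw [ins_get_lt hn hd] at hB
    exact ⟨B, by rw [ins_get_lt hn hd]; exact hB, fun _ hS => hS⟩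
  · rw [ins_get_self hd] at hB
    cases hB
    exact ⟨A', by rw [ins_get_self hd], h⟩
  · obtain ⟨m, rfl⟩ : ∃ m, n = m + 1 := ⟨n - 1, by omega⟩
    have hm : d ≤ m := by omega
    rw [ins_get_ge hm hd] at hB
    exact ⟨B, by rw [ins_get_ge hm hd]; exact hB, fun _ hS => hS⟩

/-! ### Lift weakening and strengthening -/

lemma liftTyping {Γ M T} (h : Typing Γ M T) :
    ∀ {d A}, d ≤ Γ.length → Typing (ins d A Γ) (Term.lift d M) T := by
  induction h with
  | @var Γ n B hB =>
    intro d A hd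
    simp only [Term.lift]
    split
    · exact .var (by rwa [ins_get_lt (by assumption) hd])
    · have hn : d ≤ n := by omega
      exact .var (by rwa [ins_get_ge hn hd])
  | app _ _ ih1 ih2 => exact fun hd => .app (ih1 hd) (ih2 hd)
  | lam _ ih =>
    intro d A hd
    exact .lam (ih (d := d+1) (by simpa using Nat.succ_le_succ hd))
  | interI _ _ ih1 ih2 => exact fun hd => .interI (ih1 hd) (ih2 hd)
  | interE1 _ ih => exact fun hd => (ih hd).interE1
  | interE2 _ ih => exact fun hd => (ih hd).interE2

lemma strengthTyping {Γ' P T} (h : Typing Γ' P T) :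
    ∀ {Γ d A M}, Γ' = ins d A Γ → P = Term.lift d M → d ≤ Γ.length → Typing Γ M T := by
  induction h with
  | @var Γ0 n B hB =>
    intro Γ d A M hΓ hP hd
    subst hΓ
    cases M with
    | var m =>
      simp only [Term.lift] at hP
      injection hP with hP
      by_cases hm : m < d
      · rw [if_pos hm] at hP; subst hP
        exact .var (by rwa [ins_get_lt hm hd] at hB)
      · rw [if_neg hm] at hP; subst hP
        exact .var (by rwa [ins_get_ge (by omega) hd] at hB)
    | lam M1 => simp [Term.lift] at hP
    | app M1 M2 => simp [Term.lift] at hP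
  | app _ _ ih1 ih2 =>
    intro Γ d A M hΓ hP hd
    cases M with
    | var m => simp [Term.lift] at hP
    | lam M1 => simp [Term.lift] at hP
    | app M1 M2 =>
      simp only [Term.lift] at hP
      injection hP with h1 h2
      exact .app (ih1 hΓ h1 hd) (ih2 hΓ h2 hd)
  | @lam Γ0 P1 A0 B0 _ ih =>
    intro Γ d A M hΓ hP hd
    cases M with
    | var m => simp [Term.lift] at hP
    | app M1 M2 => simp [Term.lift] at hP
    | lam M1 =>
      simp only [Term.lift] at hP
      injection hP with h1
      refine .lam (ih (Γ := A0 :: Γ) (d := d+1) (A := A) ?_ h1 (by simpa using Nat.succ_le_succ hd))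
      rw [hΓ]; rfl
  | interI _ _ ih1 ih2 =>
    exact fun hΓ hP hd => .interI (ih1 hΓ hP hd) (ih2 hΓ hP hd)
  | interE1 _ ih => exact fun hΓ hP hd => (ih hΓ hP hd).interE1
  | interE2 _ ih => exact fun hΓ hP hd => (ih hΓ hP hd).interE2


/-! ### Gluing existentials over components -/

lemma exists_glue {Γ : List Ty} {k : ℕ} {M : Term} (P : Ty → Prop)
    (hP : ∀ A B, P A → P B → P (glue A B)) (hk : k ≤ Γ.length) :
    ∀ (T : Ty), (∀ S ∈ comps T, ∃ A, P A ∧ Typing (ins k A Γ) M (.simple S)) →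
      ∃ A, P A ∧ Typing (ins k A Γ) M T := by
  intro T
  induction T using Ty.rec' with
  | h1 S =>
    intro h
    exact h S (by simp [comps])
  | h2 S T' ih =>
    intro h
    obtain ⟨A1, hP1, h1⟩ := h S (by simp [comps])
    obtain ⟨A2, hP2, h2⟩ := ih (fun S' hS' => h S' (by simp [comps, hS']))
    refine ⟨glue A1 A2, hP _ _ hP1 hP2, .interI ?_ ?_⟩
    · exact ctxMono h1 (ctxLe_ins (fun S' hS' => by rw [comps_glue]; exact List.mem_append_left _ hS') hk)
    · exact ctxMono h2 (ctxLe_ins (fun S' hS' => by rw [comps_glue]; exact List.mem_append_right _ hS') hk)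

/-! ### Anti-substitution -/

lemma antisubst : ∀ (M : Term) {Γ : List Ty} {k : ℕ} {N : Term} {T C : Ty},
    k ≤ Γ.length →
    Typing Γ (Term.subst M k N) T →
    (∀ S ∈ comps C, Typing Γ N (.simple S)) →
    ∃ A, (∀ S ∈ comps A, Typing Γ N (.simple S)) ∧ Typing (ins k A Γ) M T
  | .var m, Γ, k, N, T, C => by
    intro hk h hC
    by_cases hm : m = k
    · subst hm
      simp only [Term.subst, if_pos rfl] at h
      exact ⟨T, fun S hS => compE h hS, .var (ins_get_self hk)⟩
    · simp only [Term.subst, if_neg hm] at h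
      refine ⟨C, hC, ?_⟩
      by_cases hlt : m < k
      · rw [if_pos hlt] at h
        obtain ⟨A0, hA0, hsub⟩ := varInv h m rfl
        exact ofSubset hsub (.var (by rw [ins_get_lt hlt hk]; exact hA0))
      · rw [if_neg hlt] at h
        obtain ⟨A0, hA0, hsub⟩ := varInv h (m-1) rfl
        have hm1 : m = (m - 1) + 1 := by omega
        refine ofSubset hsub (.var ?_)
        rw [hm1, ins_get_ge (by omega) hk]
        exact hA0
  | .lam M1, Γ, k, N, T, C => by
    intro hk h hC
    simp only [Term.subst] at h
    apply exists_glue (fun A => ∀ S ∈ comps A, Typing Γ N (.simple S))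
      (fun A B hA hB S hS => by
        rw [comps_glue] at hS
        rcases List.mem_append.1 hS with hS | hS
        · exact hA S hS
        · exact hB S hS) hk
    intro S hS
    obtain ⟨D, B, rfl, hbody⟩ := lamInv h _ rfl S hS
    have hC' : ∀ S' ∈ comps C, Typing (D :: Γ) (Term.lift 0 N) (.simple S') :=
      fun S' hS' => liftTyping (hC S' hS') (d := 0) (A := D) (Nat.zero_le _)
    obtain ⟨A1, hA1, hty⟩ := antisubst M1 (Γ := D :: Γ) (k := k+1)
      (by simpa using Nat.succ_le_succ hk) hbody hC'
    refine ⟨A1, ?_, ?_⟩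
    · exact fun S' hS' =>
        strengthTyping (hA1 S' hS') (Γ := Γ) (d := 0) (A := D) rfl rfl (Nat.zero_le _)
    · exact .lam hty
  | .app M1 M2, Γ, k, N, T, C => by
    intro hk h hC
    simp only [Term.subst] at h
    apply exists_glue (fun A => ∀ S ∈ comps A, Typing Γ N (.simple S))
      (fun A B hA hB S hS => by
        rw [comps_glue] at hS
        rcases List.mem_append.1 hS with hS | hS
        · exact hA S hS
        · exact hB S hS) hk
    intro S hS
    obtain ⟨D, hQ1, hQ2⟩ := appInv h _ _ rfl S hS
    obtain ⟨A1, hA1, h1⟩ := antisubst M1 hk hQ1 hC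
    obtain ⟨A2, hA2, h2⟩ := antisubst M2 hk hQ2 hC
    refine ⟨glue A1 A2, ?_, ?_⟩
    · intro S' hS'
      rw [comps_glue] at hS'
      rcases List.mem_append.1 hS' with hS' | hS'
      · exact hA1 S' hS'
      · exact hA2 S' hS'
    · refine .app (ctxMono h1 (ctxLe_ins ?_ hk)) (ctxMono h2 (ctxLe_ins ?_ hk))
      · exact fun S' hS' => by rw [comps_glue]; exact List.mem_append_left _ hS'
      · exact fun S' hS' => by rw [comps_glue]; exact List.mem_append_right _ hS'

/-! ### β-expansion -/

lemma betaExpand {Γ M N T C} (h : Typing Γ (Term.subst M 0 N) T)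
    (hC : ∀ S ∈ comps C, Typing Γ N (.simple S)) : Typing Γ (.app (.lam M) N) T := by
  obtain ⟨A, hA, hM⟩ := antisubst M (k := 0) (Nat.zero_le _) h hC
  apply compI
  intro S hS
  exact .app (.lam (compE hM hS)) (compI hA)

/-! ### appList lemmas -/

lemma appList_mono : ∀ (Ps : List Term) {Γ : List Ty} {Q Q' : Term},
    (∀ T, Typing Γ Q T → Typing Γ Q' T) →
    ∀ T, Typing Γ (appList Q Ps) T → Typing Γ (appList Q' Ps) T
  | [] => fun hQ T h => hQ T h
  | P :: Ps => fun hQ T h =>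
    appList_mono Ps (fun T' h' => compI fun S hS => by
      obtain ⟨D, h1, h2⟩ := appInv h' _ _ rfl S hS
      exact .app (hQ _ h1) h2) T h

lemma appList_step : ∀ (Ps : List Term) {r H H'}, Step r H H' →
    Step r (appList H Ps) (appList H' Ps)
  | [], _, _, _, h => h
  | P :: Ps, r, H, H', h => appList_step Ps (Step.appCongL P h)

/-! ### Spine decomposition -/

def spineHead : Term → Term
  | .var n => .var n
  | .lam M => .lam M
  | .app u _ => spineHead u

def spineArgs : Term → List Term
  | .var _ => []
  | .lam _ => []
  | .app u v => spineArgs u ++ [v]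

lemma spine_eq : ∀ t, appList (spineHead t) (spineArgs t) = t
  | .var n => rfl
  | .lam M => rfl
  | .app u v => by
    show appList (spineHead u) (spineArgs u ++ [v]) = _
    rw [show appList (spineHead u) (spineArgs u ++ [v])
        = .app (appList (spineHead u) (spineArgs u)) v by simp [appList]]
    rw [spine_eq u]

lemma spineHead_shape : ∀ t, (∃ n, spineHead t = .var n) ∨ (∃ M, spineHead t = .lam M)
  | .var n => Or.inl ⟨n, rfl⟩
  | .lam M => Or.inr ⟨M, rfl⟩
  | .app u _ => spineHead_shape u

/-! ### The well-founded relation -/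

inductive Sub : Term → Term → Prop
  | lam (M) : Sub M (.lam M)
  | appL (M N) : Sub M (.app M N)
  | appR (M N) : Sub N (.app M N)

def R (a b : Term) : Prop := Step .beta b a ∨ Sub a b

lemma step_lift {u t u' : Term} {r} (hsub : Sub u t) (hst : Step r u u') :
    ∃ t', Step r t t' ∧ Sub u' t' := by
  cases hsub with
  | lam M => exact ⟨_, hst.lamCong, .lam _⟩
  | appL M N => exact ⟨_, Step.appCongL N hst, .appL _ _⟩
  | appR M N => exact ⟨_, Step.appCongR M hst, .appR _ _⟩

lemma lift_star {u t : Term} {r} (h : Relation.ReflTransGen Sub u t) :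
    ∀ {u'}, Step r u u' → ∃ t', Step r t t' ∧ Relation.ReflTransGen Sub u' t' := by
  induction h using Relation.ReflTransGen.head_induction_on with
  | refl => exact fun hst => ⟨_, hst, .refl⟩
  | head hsub _ ih =>
    intro u' hst
    obtain ⟨v', hv', hsubv⟩ := step_lift hsub hst
    obtain ⟨t', ht', hstar⟩ := ih hv'
    exact ⟨t', ht', .head hsubv hstar⟩

lemma acc_of_rtg {x y : Term} (hx : Acc R x) (h : Relation.ReflTransGen Sub y x) : Acc R y := by
  induction h using Relation.ReflTransGen.head_induction_on with
  | refl => exact hx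
  | head hsub _ ih => exact Acc.inv ih (Or.inr hsub)

lemma acc_R (t : Term) (h : Acc (fun a b => Step .beta b a) t) : Acc R t := by
  induction h with
  | intro t hacc ih =>
    have inner : ∀ u, Relation.ReflTransGen Sub u t → Acc R u := by
      intro u
      induction u with
      | var n =>
        intro _
        refine Acc.intro _ ?_
        rintro a (hstep | hsub)
        · cases hstep
        · cases hsub
      | lam M ihM =>
        intro hst
        refine Acc.intro _ ?_
        rintro a (hstep | hsub)
        · obtain ⟨t', ht', hsub'⟩ := lift_star hst hstep
          exact acc_of_rtg (ih t' ht') hsub'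
        · cases hsub
          exact ihM (Relation.ReflTransGen.head (Sub.lam M) hst)
      | app u v ihu ihv =>
        intro hst
        refine Acc.intro _ ?_
        rintro a (hstep | hsub)
        · obtain ⟨t', ht', hsub'⟩ := lift_star hst hstep
          exact acc_of_rtg (ih t' ht') hsub'
        · cases hsub with
          | appL => exact ihu (Relation.ReflTransGen.head (Sub.appL _ _) hst)
          | appR => exact ihv (Relation.ReflTransGen.head (Sub.appR _ _) hst)
    exact inner t .refl

lemma mem_spineArgs_sub : ∀ {t P : Term}, P ∈ spineArgs t → Relation.TransGen R P t := by
  intro t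
  induction t with
  | var n => intro P hP; simp [spineArgs] at hP
  | lam M ih => intro P hP; simp [spineArgs] at hP
  | app u v ihu ihv =>
    intro P hP
    rw [spineArgs] at hP
    rcases List.mem_append.1 hP with h | h
    · exact (ihu h).tail (Or.inr (Sub.appL u v))
    · simp at h; subst h
      exact .single (Or.inr (Sub.appR _ _))

/-! ### Typability of spines with variable head -/

def chainTy : List Ty → STy
  | [] => .atom 0
  | A :: As => .arrow A (chainTy As)

lemma chain_typing {Γ : List Ty} : ∀ {Ps : List Term} {As : List Ty},
    List.Forall₂ (Typing Γ) Ps As → ∀ {H}, Typing Γ H (.simple (chainTy As)) →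
    Typing Γ (appList H Ps) (.simple (.atom 0)) := by
  intro Ps As h
  induction h with
  | nil => exact fun h => h
  | cons hPA _ ih => exact fun hH => ih (.app hH hPA)

lemma exists_ctx : ∀ (Ps : List Term), (∀ P ∈ Ps, Typable P) →
    ∃ Γ As, List.Forall₂ (Typing Γ) Ps As := by
  intro Ps
  induction Ps with
  | nil => exact fun _ => ⟨[], [], .nil⟩
  | cons P Ps ih =>
    intro h
    obtain ⟨Γ1, A, hA⟩ := h P (by simp)
    obtain ⟨Γ2, As, hAs⟩ := ih fun Q hQ => h Q (by simp [hQ])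
    refine ⟨glueCtx Γ1 Γ2, A :: As, .cons (ctxMono hA (ctxLe_glue_left _ _)) ?_⟩
    exact List.Forall₂.imp (fun _ _ hh => ctxMono hh (ctxLe_glue_right Γ1 Γ2)) hAs

lemma typable_var_head (n : ℕ) (Ps : List Term) (h : ∀ P ∈ Ps, Typable P) :
    Typable (appList (.var n) Ps) := by
  obtain ⟨Γ, As, hAs⟩ := exists_ctx Ps h
  set S := chainTy As with hSdef
  set Γx : List Ty := List.replicate n (Ty.simple (.atom 0)) ++ [Ty.simple S] with hΓx
  have hget : Γx[n]? = some (Ty.simple S) := by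
    rw [hΓx, List.getElem?_append_right (by simp)]
    simp
  refine ⟨glueCtx Γx Γ, .simple (.atom 0), ?_⟩
  refine chain_typing
    (List.Forall₂.imp (fun _ _ hh => ctxMono hh (ctxLe_glue_right Γx Γ)) hAs) ?_
  exact ctxMono (.var hget) (ctxLe_glue_left _ _)

lemma typable_lam {M : Term} (h : Typable M) : Typable (.lam M) := by
  obtain ⟨Γ, T, hT⟩ := h
  obtain ⟨S, hS⟩ := exists_comp T
  have hMS := compE hT hS
  cases Γ with
  | nil =>
    have hM : Typing [Ty.simple (.atom 0)] M (.simple S) :=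
      ctxMono hMS (by intro n A hA; simp at hA)
    exact ⟨[], _, .lam hM⟩
  | cons A Δ => exact ⟨Δ, _, .lam hMS⟩

end SNProof

open SNProof in
/-- Every β-strongly-normalizing term is typable in system D. -/
theorem typable_of_snBeta (t : Term) (h : SNbeta t) : Typable t := by
  have h2 : Acc (Relation.TransGen R) t := (acc_R t h).transGen
  clear h
  induction h2 with
  | intro t hacc ih =>
    cases t with
    | var n => exact typable_var_head n [] (by simp)
    | lam M => exact typable_lam (ih M (.single (Or.inr (Sub.lam M))))
    | app u v =>
      have hspine := spine_eq (Term.app u v)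
      rcases spineHead_shape (Term.app u v) with ⟨n, hn⟩ | ⟨M, hM⟩
      · rw [hn] at hspine
        rw [← hspine]
        exact typable_var_head n _ fun P hP => ih P (mem_spineArgs_sub hP)
      · obtain ⟨N, Ps, hargs2⟩ : ∃ N Ps, spineArgs (Term.app u v) = N :: Ps := by
          rw [show spineArgs (Term.app u v) = spineArgs u ++ [v] from rfl]
          cases spineArgs u with
          | nil => exact ⟨v, [], rfl⟩
          | cons a l => exact ⟨a, l ++ [v], rfl⟩
        rw [hM, hargs2] at hspine
        have hstep : Step .beta (Term.app u v) (appList (Term.subst M 0 N) Ps) := by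
          rw [← hspine]
          exact appList_step Ps (Step.beta M N)
        have hN : Typable N := ih N (mem_spineArgs_sub (by rw [hargs2]; simp))
        have ht' : Typable (appList (Term.subst M 0 N) Ps) :=
          ih _ (.single (Or.inl hstep))
        obtain ⟨Γ1, T, hT⟩ := ht'
        obtain ⟨Γ2, C, hC⟩ := hN
        have hT' : Typing (glueCtx Γ1 Γ2) (appList (Term.subst M 0 N) Ps) T :=
          ctxMono hT (ctxLe_glue_left _ _)
        have hC' : ∀ S ∈ comps C, Typing (glueCtx Γ1 Γ2) N (.simple S) :=
          fun S hS => compE (ctxMono hC (ctxLe_glue_right _ _)) hS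
        have key := appList_mono Ps (fun T' h' => betaExpand h' hC') T hT'
        rw [← hspine]
        exact ⟨glueCtx Γ1 Γ2, T, key⟩
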